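/- Let t₀ > 0 and let X : (0,∞) → H be twice continuously differentiable and satisfy the Dist-AGM dynamics Ẍ(t) + (3/t)·Ẋ(t) + t^{−β}·∇F(X(t)) + L̃X(t) = 0 for all t > 0. Assume in addition that F is convex and that F(X(s)) ≥ F* for all s ≥ t₀. Then for every t ≥ t₀, t^{2−β}·(F(X(t)) − F*) ≤ (1/2)·‖t₀·Ẋ(t₀) + 2(X(t₀) − X*)‖² + (t₀²/2)·⟨X(t₀) − X*, L̃(X(t₀) − X*)⟩ + t₀^{2−β}·(F(X(t₀)) − F*). -/

import Mathlib

/-!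
Lyapunov argument: `distAGMEnergy` is nonincreasing on `[t₀, ∞)` and dominates
`t^{2-β} (F(X t) - F*)`, while its value at `t₀` is the right-hand side. Multiplying the ODE by `t`
turns `t Ẍ + 3 Ẋ` into the derivative of the momentum `t Ẋ + 2 (X - X*)`, and the energy derivative
becomes `distAGMDissipation`. By convexity `⟪∇F(X), X - X*⟫ ≥ F(X) - F*`, so the dissipation is at most
`-β t^{1-β} (F(X) - F*) - t ⟪X - X*, L̃ (X - X*)⟫ ≤ 0`.
-/

open scoped RealInnerProductSpace

section

variable {H : Type*} [NormedAddCommGroup H] [InnerProductSpace ℝ H]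

theorem HasGradientAt.comp_hasDerivAt [CompleteSpace H] {f : H → ℝ} {g : H} {X : ℝ → H}
    {x' : H} {t : ℝ} (hf : HasGradientAt f g (X t)) (hX : HasDerivAt X x' t) :
    HasDerivAt (fun s => f (X s)) ⟪g, x'⟫ t :=
  hf.hasFDerivAt.comp_hasDerivAt t hX

theorem ConvexOn.sub_le_inner_gradient [CompleteSpace H] {s : Set H} {F : H → ℝ}
    (hF : ConvexOn ℝ s F) {x y : H} (hx : x ∈ s) (hy : y ∈ s) (hFx : DifferentiableAt ℝ F x) :
    F x - F y ≤ ⟪gradient F x, x - y⟫ := by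
  set A : ℝ →ᵃ[ℝ] H := AffineMap.lineMap y x
  have hA1 : A 1 = x := AffineMap.lineMap_apply_one y x
  have hline : HasDerivAt (fun r : ℝ => A r) (x - y) 1 := by
    simp only [A, AffineMap.lineMap_apply_module']
    simpa using ((hasDerivAt_id (1 : ℝ)).smul_const (x - y)).add_const y
  have hgrad : HasGradientAt F (gradient F x) (A 1) := hA1 ▸ hFx.hasGradientAt
  have := (hF.comp_affineMap A).slope_le_of_hasDerivAt (x := 0) (y := 1)
    (by simpa [A] using hy) (by simpa [hA1] using hx) one_pos (hgrad.comp_hasDerivAt hline)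
  simpa [slope_def_field, hA1, A] using this

theorem HasDerivAt.inner_apply_self_of_isSymmetric {L : H →L[ℝ] H}
    (hL : (L : H →ₗ[ℝ] H).IsSymmetric) {Y : ℝ → H} {y' : H} {t : ℝ} (hY : HasDerivAt Y y' t) :
    HasDerivAt (fun s => ⟪Y s, L (Y s)⟫) (2 * ⟪y', L (Y t)⟫) t := by
  refine (hY.inner ℝ (L.hasFDerivAt.comp_hasDerivAt t hY)).congr_deriv ?_
  have := hL (Y t) y'
  simp only [ContinuousLinearMap.coe_coe] at this
  rw [Function.comp_apply, ← this, real_inner_comm]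
  ring

noncomputable def distAGMEnergy (F : H → ℝ) (L : H →L[ℝ] H) (Xs : H) (β : ℝ) (X : ℝ → H)
    (t : ℝ) : ℝ :=
  (1 / 2) * ‖t • deriv X t + (2 : ℝ) • (X t - Xs)‖ ^ 2
    + (t ^ 2 / 2) * ⟪X t - Xs, L (X t - Xs)⟫ + t ^ (2 - β) * (F (X t) - F Xs)

noncomputable def distAGMDissipation [CompleteSpace H] (F : H → ℝ) (L : H →L[ℝ] H) (Xs : H)
    (β : ℝ) (x : H) (t : ℝ) : ℝ :=
  t ^ (1 - β) * ((2 - β) * (F x - F Xs) - 2 * ⟪gradient F x, x - Xs⟫) - t * ⟪x - Xs, L (x - Xs)⟫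

section Energy

variable {F : H → ℝ} {L : H →L[ℝ] H} {Xs : H} {β : ℝ} {X : ℝ → H} {t : ℝ}

theorem mul_sub_le_distAGMEnergy (hpsd : ∀ x, 0 ≤ ⟪x, L x⟫) (t : ℝ) :
    t ^ (2 - β) * (F (X t) - F Xs) ≤ distAGMEnergy F L Xs β X t := by
  have := hpsd (X t - Xs)
  unfold distAGMEnergy
  nlinarith [sq_nonneg ‖t • deriv X t + (2 : ℝ) • (X t - Xs)‖, sq_nonneg t]

variable [CompleteSpace H]

theorem hasDerivAt_distAGMEnergy (hL : (L : H →ₗ[ℝ] H).IsSymmetric) (ht : 0 < t)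
    (hX : HasDerivAt X (deriv X t) t) (hX' : HasDerivAt (deriv X) (deriv (deriv X) t) t)
    (hF : DifferentiableAt ℝ F (X t)) :
    HasDerivAt (distAGMEnergy F L Xs β X)
      (⟪t • deriv X t + (2 : ℝ) • (X t - Xs), t • deriv (deriv X) t + (3 : ℝ) • deriv X t⟫
        + (t * ⟪X t - Xs, L (X t - Xs)⟫ + t ^ 2 * ⟪deriv X t, L (X t - Xs)⟫)
        + ((2 - β) * t ^ (1 - β) * (F (X t) - F Xs)
          + t ^ (2 - β) * ⟪gradient F (X t), deriv X t⟫)) t := by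
  have hY : HasDerivAt (fun s => X s - Xs) (deriv X t) t := hX.sub_const Xs
  have hv : HasDerivAt (fun s => s • deriv X s + (2 : ℝ) • (X s - Xs))
      (t • deriv (deriv X) t + (3 : ℝ) • deriv X t) t := by
    refine (((hasDerivAt_id' t).smul hX').add (hY.const_smul (2 : ℝ))).congr_deriv ?_
    module
  have hkin := hv.norm_sq.const_mul (1 / 2)
  have hpot := ((hasDerivAt_pow 2 t).div_const 2).mul (hY.inner_apply_self_of_isSymmetric hL)
  have hval := (Real.hasDerivAt_rpow_const (p := 2 - β) (Or.inl ht.ne')).mul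
    ((hF.hasGradientAt.comp_hasDerivAt hX).sub_const (F Xs))
  refine ((hkin.add hpot).add hval).congr_deriv ?_
  rw [show (2 - β - 1 : ℝ) = 1 - β by ring]
  push_cast
  ring

theorem hasDerivAt_distAGMEnergy_of_ode (hL : (L : H →ₗ[ℝ] H).IsSymmetric) (hXs : L Xs = 0)
    (ht : 0 < t) (hX : HasDerivAt X (deriv X t) t)
    (hX' : HasDerivAt (deriv X) (deriv (deriv X) t) t) (hF : DifferentiableAt ℝ F (X t))
    (hode : deriv (deriv X) t + (3 / t) • deriv X t
        + (t ^ (-β)) • gradient F (X t) + L (X t) = 0) :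
    HasDerivAt (distAGMEnergy F L Xs β X) (distAGMDissipation F L Xs β (X t) t) t := by
  have hpow : t ^ (1 - β) = t * t ^ (-β) := by
    rw [sub_eq_add_neg, Real.rpow_add ht, Real.rpow_one]
  have hpow' : t ^ (2 - β) = t * t ^ (1 - β) := by
    rw [show (2 - β) = 1 + (1 - β) by ring, Real.rpow_add ht, Real.rpow_one]
  have hacc : t • deriv (deriv X) t + (3 : ℝ) • deriv X t
      = -(t ^ (1 - β) • gradient F (X t) + t • L (X t - Xs)) := by
    rw [map_sub, hXs, sub_zero, hpow]
    have ht0 := ht.ne'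
    linear_combination (norm := match_scalars <;> field_simp <;> ring) t • hode
  convert hasDerivAt_distAGMEnergy hL ht hX hX' hF using 1
  rw [hacc, hpow', distAGMDissipation]
  simp only [inner_add_left, inner_add_right, inner_neg_right, real_inner_smul_left,
    real_inner_smul_right, real_inner_comm (deriv X t) (gradient F (X t)),
    real_inner_comm (X t - Xs) (gradient F (X t))]
  ring

theorem distAGMDissipation_nonpos (hconv : ConvexOn ℝ Set.univ F) (hpsd : ∀ x, 0 ≤ ⟪x, L x⟫)
    (hβ : 0 ≤ β) (ht : 0 < t) {x : H} (hF : DifferentiableAt ℝ F x) (hlower : F Xs ≤ F x) :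
    distAGMDissipation F L Xs β x t ≤ 0 := by
  have hgrad := hconv.sub_le_inner_gradient (Set.mem_univ x) (Set.mem_univ Xs) hF
  have hcoeff : (2 - β) * (F x - F Xs) - 2 * ⟪gradient F x, x - Xs⟫ ≤ 0 := by
    nlinarith [mul_nonneg hβ (sub_nonneg.2 hlower)]
  have := mul_nonpos_of_nonneg_of_nonpos (Real.rpow_pos_of_pos ht (1 - β)).le hcoeff
  have := mul_nonneg ht.le (hpsd (x - Xs))
  unfold distAGMDissipation
  linarith

theorem antitoneOn_distAGMEnergy (hF : Differentiable ℝ F) (hconv : ConvexOn ℝ Set.univ F)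
    (hL : (L : H →ₗ[ℝ] H).IsSymmetric) (hpsd : ∀ x, 0 ≤ ⟪x, L x⟫) (hXs : L Xs = 0)
    (hβ : 0 ≤ β) {t₀ : ℝ} (ht₀ : 0 < t₀) (hX : ContDiffOn ℝ 2 X (Set.Ioi 0))
    (hode : ∀ t ≥ t₀, deriv (deriv X) t + (3 / t) • deriv X t
        + (t ^ (-β)) • gradient F (X t) + L (X t) = 0)
    (hlower : ∀ t ≥ t₀, F Xs ≤ F (X t)) :
    AntitoneOn (distAGMEnergy F L Xs β X) (Set.Ici t₀) := by
  have hderiv : ∀ t ≥ t₀,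
      HasDerivAt (distAGMEnergy F L Xs β X) (distAGMDissipation F L Xs β (X t) t) t := by
    intro t ht
    have hnhds : Set.Ioi (0 : ℝ) ∈ nhds t := isOpen_Ioi.mem_nhds (ht₀.trans_le ht)
    have hX' := hX.deriv_of_isOpen (m := 1) isOpen_Ioi (by norm_num)
    exact hasDerivAt_distAGMEnergy_of_ode hL hXs (ht₀.trans_le ht)
      ((hX.differentiableOn two_ne_zero).differentiableAt hnhds).hasDerivAt
      ((hX'.differentiableOn one_ne_zero).differentiableAt hnhds).hasDerivAt (hF _) (hode t ht)
  refine antitoneOn_of_hasDerivWithinAt_nonpos (f' := fun t => distAGMDissipation F L Xs β (X t) t)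
    (convex_Ici t₀)
    (fun t ht => (hderiv t ht).continuousAt.continuousWithinAt) (fun t ht => ?_) (fun t ht => ?_)
  all_goals simp only [interior_Ici] at ht ⊢
  · exact (hderiv t ht.le).hasDerivWithinAt
  · exact distAGMDissipation_nonpos hconv hpsd hβ (ht₀.trans ht) (hF _) (hlower t ht.le)

end Energy

end

theorem distAGM_function_value_bound
    {H : Type*} [NormedAddCommGroup H] [InnerProductSpace ℝ H] [FiniteDimensional ℝ H]
    (F : H → ℝ) (hF : ContDiff ℝ 1 F) (hconv : ConvexOn ℝ Set.univ F)
    (L : H →L[ℝ] H) (hsym : ∀ x y : H, ⟪L x, y⟫ = ⟪x, L y⟫)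
    (hpsd : ∀ x : H, 0 ≤ ⟪x, L x⟫)
    (Xs : H) (hXs : L Xs = 0)
    (β : ℝ) (hβ : 0 < β)
    (t₀ : ℝ) (ht₀ : 0 < t₀)
    (X : ℝ → H) (hX : ContDiffOn ℝ 2 X (Set.Ioi 0))
    (hode : ∀ t > (0 : ℝ),
      deriv (deriv X) t + (3 / t) • deriv X t
        + (t ^ (-β)) • gradient F (X t) + L (X t) = 0)
    (hlower : ∀ s ≥ t₀, F Xs ≤ F (X s)) :
    ∀ t ≥ t₀,
      t ^ (2 - β) * (F (X t) - F Xs)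
      ≤ (1 / 2) * ‖t₀ • deriv X t₀ + (2 : ℝ) • (X t₀ - Xs)‖ ^ 2
        + (t₀ ^ 2 / 2) * ⟪X t₀ - Xs, L (X t₀ - Xs)⟫
        + t₀ ^ (2 - β) * (F (X t₀) - F Xs) := by
  intro t ht
  have hanti := antitoneOn_distAGMEnergy (hF.differentiable one_ne_zero) hconv hsym hpsd hXs
    hβ.le ht₀ hX (fun s hs => hode s (ht₀.trans_le hs)) hlower
  calc t ^ (2 - β) * (F (X t) - F Xs) ≤ distAGMEnergy F L Xs β X t :=
        mul_sub_le_distAGMEnergy hpsd t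
    _ ≤ distAGMEnergy F L Xs β X t₀ := hanti Set.self_mem_Ici ht ht
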